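/- arXiv:2605.09374 — 2 statements merged into one kernel-verified Lean document; each statement's English description precedes it below -/
import Mathlib

section
/- Let h : ℝ → ℝ be defined by h(u) = -ln(1+u) for u ≥ 0 and h(u) = ln(1-u) for u < 0. Then for all u, v ∈ ℝ, (h(u) - h(v))(u - v) ≤ -|h(u) - h(v)|². -/
/-- `h(u) = -ln(1+u)` for `u ≥ 0` and `h(u) = ln(1-u)` for `u < 0` satisfies
`(h(u) - h(v)) (u - v) ≤ -|h(u) - h(v)|²` for all `u v : ℝ`. -/
theorem stmt5
    (h : ℝ → ℝ)
    (hh : ∀ u : ℝ, h u = if 0 ≤ u then -Real.log (1 + u) else Real.log (1 - u)) :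
    ∀ u v : ℝ, (h u - h v) * (u - v) ≤ -|h u - h v| ^ 2 := by
  have key : ∀ u v : ℝ, v ≤ u → 0 ≤ h v - h u ∧ h v - h u ≤ u - v := by
    intro u v huv
    rw [hh u, hh v]
    by_cases hu : 0 ≤ u <;> by_cases hv : 0 ≤ v
    · rw [if_pos hu, if_pos hv]
      constructor
      · have := Real.log_le_log (by linarith : (0:ℝ) < 1 + v) (by linarith : 1 + v ≤ 1 + u)
        linarith
      · have h1 := Real.log_le_sub_one_of_pos (x := (1+u)/(1+v)) (by positivity)
        rw [Real.log_div (by positivity) (by positivity)] at h1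
        have h2 : (1+u)/(1+v) - 1 = (u - v)/(1+v) := by
          field_simp
          ring
        have h3 : (u - v)/(1+v) ≤ u - v :=
          div_le_self (by linarith) (by linarith)
        linarith
    · rw [if_pos hu, if_neg hv]
      push_neg at hv
      have l1 := Real.log_le_sub_one_of_pos (x := 1 + u) (by linarith)
      have l2 := Real.log_le_sub_one_of_pos (x := 1 - v) (by linarith)
      have l3 : 0 ≤ Real.log (1 + u) := Real.log_nonneg (by linarith)
      have l4 : 0 ≤ Real.log (1 - v) := Real.log_nonneg (by linarith)
      constructor <;> linarith
    · exact absurd (le_trans hv huv) hu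
    · rw [if_neg hu, if_neg hv]
      push_neg at hu hv
      constructor
      · have := Real.log_le_log (by linarith : (0:ℝ) < 1 - u) (by linarith : 1 - u ≤ 1 - v)
        linarith
      · have hlu : (0:ℝ) < 1 - u := by linarith
        have hlv : (0:ℝ) < 1 - v := by linarith
        have h1 := Real.log_le_sub_one_of_pos (x := (1-v)/(1-u)) (div_pos hlv hlu)
        rw [Real.log_div hlv.ne' hlu.ne'] at h1
        have h2 : (1-v)/(1-u) - 1 = (u - v)/(1-u) := by
          field_simp
          ring
        have h3 : (u - v)/(1-u) ≤ u - v :=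
          div_le_self (by linarith) (by linarith)
        linarith
  intro u v
  rcases le_total v u with hle | hle
  · obtain ⟨h1, h2⟩ := key u v hle
    have habs : |h u - h v| = h v - h u := by
      rw [abs_sub_comm]; exact abs_of_nonneg h1
    rw [habs]
    nlinarith [mul_nonneg h1 (by linarith : (0:ℝ) ≤ u - v - (h v - h u))]
  · obtain ⟨h1, h2⟩ := key v u hle
    have habs : |h u - h v| = h u - h v := abs_of_nonneg h1
    rw [habs]
    nlinarith [mul_nonneg h1 (by linarith : (0:ℝ) ≤ v - u - (h u - h v))]
end

section
/- Let g : ℝⁿ → ℝ be differentiable with gradient ∇g satisfying ⟨∇g(x) - ∇g(y), x - y⟩ ≥ δ|x - y|² for some δ > 0 and all x, y ∈ ℝⁿ. Then ∇g : ℝⁿ → ℝⁿ is a bijection, and its inverse map (∇g)^{-1} is Lipschitz continuous with Lipschitz constant 1/δ. -/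
open scoped RealInnerProductSpace

section aux

variable {n : ℕ}

lemma grad_fderiv_apply (g : EuclideanSpace ℝ (Fin n) → ℝ)
    (p w : EuclideanSpace ℝ (Fin n)) : fderiv ℝ g p w = ⟪gradient g p, w⟫ := by
  have h : fderiv ℝ g p = InnerProductSpace.toDual ℝ _ (gradient g p) :=
    ((InnerProductSpace.toDual ℝ _).apply_symm_apply _).symm
  rw [h, InnerProductSpace.toDual_apply_apply]

lemma strong_convex_ineq (g : EuclideanSpace ℝ (Fin n) → ℝ)
    (hdiff : Differentiable ℝ g) (δ : ℝ) (hδ : 0 < δ)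
    (hmono : ∀ x y : EuclideanSpace ℝ (Fin n),
      ⟪gradient g x - gradient g y, x - y⟫ ≥ δ * ‖x - y‖ ^ 2)
    (x v : EuclideanSpace ℝ (Fin n)) :
    g x + ⟪gradient g x, v⟫ + δ / 2 * ‖v‖ ^ 2 ≤ g (x + v) := by
  set a : ℝ := ⟪gradient g x, v⟫ with ha
  set φ : ℝ → ℝ := fun t => g (x + t • v) - t * a - δ / 2 * t ^ 2 * ‖v‖ ^ 2 with hφdef
  have hψ : ∀ t : ℝ, HasDerivAt (fun t : ℝ => g (x + t • v))
      ⟪gradient g (x + t • v), v⟫ t := by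
    intro t
    have hc : HasDerivAt (fun t : ℝ => x + t • v) v t := by
      simpa using ((hasDerivAt_id t).smul_const v).const_add x
    have := ((hdiff (x + t • v)).hasFDerivAt).comp_hasDerivAt t hc
    rw [← grad_fderiv_apply]; exact this
  have hφ' : ∀ t : ℝ, HasDerivAt φ
      (⟪gradient g (x + t • v), v⟫ - a - δ * t * ‖v‖ ^ 2) t := by
    intro t
    have h1 : HasDerivAt (fun t : ℝ => t * a) a t := by
      simpa using (hasDerivAt_id t).mul_const a
    have h2 : HasDerivAt (fun t : ℝ => δ / 2 * t ^ 2 * ‖v‖ ^ 2)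
        (δ * t * ‖v‖ ^ 2) t := by
      have := (hasDerivAt_pow 2 t).const_mul (δ / 2)
      have := this.mul_const (‖v‖ ^ 2)
      exact this.congr_deriv (by rw [show (2:ℕ) - 1 = 1 from rfl]; push_cast; ring)
    exact ((hψ t).sub h1).sub h2
  have hmonoφ : MonotoneOn φ (Set.Ici (0 : ℝ)) := by
    apply monotoneOn_of_deriv_nonneg (convex_Ici 0)
    · exact fun t _ => ((hφ' t).continuousAt).continuousWithinAt
    · exact fun t _ => ((hφ' t).differentiableAt).differentiableWithinAt
    · intro t ht
      rw [interior_Ici] at ht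
      rw [(hφ' t).deriv]
      have hm := hmono (x + t • v) x
      have h1 : x + t • v - x = t • v := by abel
      rw [h1] at hm
      rw [real_inner_smul_right] at hm
      have hn : ‖t • v‖ ^ 2 = t ^ 2 * ‖v‖ ^ 2 := by
        rw [norm_smul, Real.norm_eq_abs, mul_pow, sq_abs]
      rw [hn, inner_sub_left] at hm
      have ht' : (0 : ℝ) < t := ht
      nlinarith [hm, ht']
  have h01 : φ 0 ≤ φ 1 := hmonoφ (by simp) (by norm_num) zero_le_one
  simp only [hφdef] at h01
  norm_num at h01
  linarith [h01]

end aux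

/-- If `g : ℝⁿ → ℝ` is differentiable with `⟪∇g x - ∇g y, x - y⟫ ≥ δ ‖x - y‖²` for some
`δ > 0`, then `∇g` is a bijection whose inverse is `(1/δ)`-Lipschitz. -/
theorem stmt10 {n : ℕ} (g : EuclideanSpace ℝ (Fin n) → ℝ)
    (hdiff : Differentiable ℝ g)
    (δ : ℝ) (hδ : 0 < δ)
    (hmono : ∀ x y : EuclideanSpace ℝ (Fin n),
      ⟪gradient g x - gradient g y, x - y⟫ ≥ δ * ‖x - y‖ ^ 2) :
    Function.Bijective (gradient g) ∧
      ∀ u v : EuclideanSpace ℝ (Fin n),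
        ‖Function.invFun (gradient g) u - Function.invFun (gradient g) v‖ ≤
          (1 / δ) * ‖u - v‖ := by
  have hinj : Function.Injective (gradient g) := by
    intro x y hxy
    have hm := hmono x y
    rw [hxy, sub_self, inner_zero_left] at hm
    have : ‖x - y‖ ^ 2 ≤ 0 := by nlinarith
    have : ‖x - y‖ = 0 := by nlinarith [sq_nonneg ‖x - y‖, norm_nonneg (x - y)]
    rwa [norm_sub_eq_zero_iff] at this
  have hsurj : Function.Surjective (gradient g) := by
    intro u
    set c : EuclideanSpace ℝ (Fin n) := gradient g 0 - u with hc
    set R : ℝ := 2 / δ * ‖c‖ + 1 with hR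
    have hRpos : 0 < R := by positivity
    clear_value R
    set h : EuclideanSpace ℝ (Fin n) → ℝ := fun y => g y - ⟪u, y⟫ with hh
    have hhcont : Continuous h := by
      exact hdiff.continuous.sub (innerSL ℝ u).continuous
    clear_value h
    have hlow : ∀ y : EuclideanSpace ℝ (Fin n),
        h 0 + ⟪c, y⟫ + δ / 2 * ‖y‖ ^ 2 ≤ h y := by
      intro y
      have := strong_convex_ineq g hdiff δ hδ hmono 0 y
      rw [zero_add] at this
      have hsplit : ⟪c, y⟫ = ⟪gradient g 0, y⟫ - ⟪u, y⟫ := by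
        rw [hc, inner_sub_left]
      simp only [hh]
      rw [hsplit]
      simp only [inner_zero_right]
      linarith
    clear_value c
    obtain ⟨x₀, hx₀mem, hx₀min⟩ :=
      (isCompact_closedBall (0 : EuclideanSpace ℝ (Fin n)) R).exists_isMinOn
        ⟨0, Metric.mem_closedBall_self hRpos.le⟩ hhcont.continuousOn
    have hx₀le : h x₀ ≤ h 0 := hx₀min (Metric.mem_closedBall_self hRpos.le)
    have hx₀lt : ‖x₀‖ < R := by
      by_contra hcon
      push_neg at hcon
      have hR' : ‖x₀‖ ≤ R := by
        simpa [Metric.mem_closedBall, dist_zero_right] using hx₀mem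
      have hRR : ‖x₀‖ = R := le_antisymm hR' hcon
      have hl := hlow x₀
      have hcs : -(‖c‖ * ‖x₀‖) ≤ ⟪c, x₀⟫ := by
        have := abs_real_inner_le_norm c x₀
        have := neg_abs_le (⟪c, x₀⟫)
        nlinarith [abs_real_inner_le_norm c x₀]
      have : h 0 - ‖c‖ * R + δ / 2 * R ^ 2 ≤ h x₀ := by
        rw [← hRR]; nlinarith
      have heqR : δ / 2 * R = ‖c‖ + δ / 2 := by
        rw [hR]; field_simp [hδ.ne']
      have h2 : δ / 2 * R ^ 2 = ‖c‖ * R + δ / 2 * R := by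
        linear_combination heqR * R
      have h3 : 0 < δ / 2 * R := mul_pos (half_pos hδ) hRpos
      have h4 : δ / 2 * R ≤ 0 := by linarith
      exact absurd h4 (not_le.mpr h3)
    have hloc : IsLocalMin h x₀ := by
      apply hx₀min.isLocalMin
      exact Metric.closedBall_mem_nhds_of_mem (by simpa [Metric.mem_ball, dist_zero_right])
    have hdh : fderiv ℝ h x₀ = 0 := hloc.fderiv_eq_zero
    have hfd : fderiv ℝ h x₀ = fderiv ℝ g x₀ - innerSL ℝ u := by
      have he : (fun y : EuclideanSpace ℝ (Fin n) => g y - inner ℝ u y) =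
          fun y => g y - innerSL ℝ u y := rfl
      rw [hh, he, fderiv_fun_sub (hdiff x₀) (innerSL ℝ u).differentiableAt,
        (innerSL ℝ u).fderiv]
    have hzero : ∀ w : EuclideanSpace ℝ (Fin n), ⟪gradient g x₀ - u, w⟫ = 0 := by
      intro w
      have := congrArg (fun f : EuclideanSpace ℝ (Fin n) →L[ℝ] ℝ => f w) (hfd ▸ hdh)
      simp only [ContinuousLinearMap.sub_apply, ContinuousLinearMap.zero_apply,
        innerSL_apply_apply] at this
      rw [inner_sub_left, ← grad_fderiv_apply g x₀ w]
      linarith [this]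
    refine ⟨x₀, ?_⟩
    have := hzero (gradient g x₀ - u)
    rw [real_inner_self_eq_norm_sq] at this
    have : ‖gradient g x₀ - u‖ = 0 := by nlinarith [norm_nonneg (gradient g x₀ - u)]
    rw [norm_sub_eq_zero_iff] at this
    exact this
  refine ⟨⟨hinj, hsurj⟩, ?_⟩
  intro u v
  set x := Function.invFun (gradient g) u with hx
  set y := Function.invFun (gradient g) v with hy
  have hgx : gradient g x = u := Function.invFun_eq (hsurj u)
  have hgy : gradient g y = v := Function.invFun_eq (hsurj v)
  have hm := hmono x y
  rw [hgx, hgy] at hm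
  have hcs : ⟪u - v, x - y⟫ ≤ ‖u - v‖ * ‖x - y‖ := real_inner_le_norm _ _
  rcases eq_or_ne x y with heq | hne
  · rw [heq, sub_self, norm_zero]
    positivity
  · have hpos : 0 < ‖x - y‖ := by
      rw [norm_pos_iff, sub_ne_zero]; exact hne
    rw [ge_iff_le] at hm
    rw [div_mul_eq_mul_div, le_div_iff₀ hδ]
    have h1 : δ * ‖x - y‖ * ‖x - y‖ ≤ ‖u - v‖ * ‖x - y‖ := by
      calc δ * ‖x - y‖ * ‖x - y‖ = δ * ‖x - y‖ ^ 2 := by ring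
        _ ≤ ⟪u - v, x - y⟫ := hm
        _ ≤ ‖u - v‖ * ‖x - y‖ := hcs
    have h2 : δ * ‖x - y‖ ≤ ‖u - v‖ := le_of_mul_le_mul_right h1 hpos
    linarith
end
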